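/- Let S be a discrete valuation ring with residue field k and fraction field K, let C be a finite free S-module, and let ∂ : C → C be an S-linear map with ∂ ∘ ∂ = 0. Write H = ker(∂)/range(∂). Then dim_k ( ker(∂_k)/range(∂_k) ) = dim_K ( ker(∂_K)/range(∂_K) ) if and only if H is a torsion-free S-module (equivalently, H is a free S-module), where ∂_k and ∂_K are the base changes of ∂ to C ⊗_S k and C ⊗_S K. -/

import Mathlib

/-!
Over a field `F`, `dim H(∂_F) = rank C - 2 dim im(∂_F)`. With `B = im ∂` (free, as a
submodule of `C`), `im(∂_F)` is the image of `B_F → C_F`, so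
`dim im(∂_F) = rank B - dim ker(B_F → C_F)`. This kernel vanishes for `F = K` by flatness, so
the two homology dimensions agree iff `B ⊗ k → C ⊗ k` is injective, i.e. (local criterion for
freeness) iff `C / B` is free, i.e. torsion free. Since a torsion element of `C / B` is
automatically a cycle, this happens iff `H` is torsion free.
-/

/-- The homology of a differential module `(C, ∂)`: `ker ∂` modulo `range ∂`
(pulled back to a submodule of `ker ∂`). -/
noncomputable def homologyOf {S C : Type*} [CommRing S] [AddCommGroup C] [Module S C]
    (d : C →ₗ[S] C) : Type _ :=
  (LinearMap.ker d) ⧸ ((LinearMap.range d).comap (LinearMap.ker d).subtype)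

noncomputable instance {S C : Type*} [CommRing S] [AddCommGroup C] [Module S C]
    (d : C →ₗ[S] C) : AddCommGroup (homologyOf d) :=
  inferInstanceAs (AddCommGroup
    ((LinearMap.ker d) ⧸ ((LinearMap.range d).comap (LinearMap.ker d).subtype)))

noncomputable instance {S C : Type*} [CommRing S] [AddCommGroup C] [Module S C]
    (d : C →ₗ[S] C) : Module S (homologyOf d) :=
  inferInstanceAs (Module S
    ((LinearMap.ker d) ⧸ ((LinearMap.range d).comap (LinearMap.ker d).subtype)))

open Module TensorProduct

theorem Submodule.isTorsionFree_quotient_iff {R M : Type*} [CommRing R] [IsDomain R]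
    [AddCommGroup M] [Module R M] (N : Submodule R M) :
    IsTorsionFree R (M ⧸ N) ↔ ∀ a : R, a ≠ 0 → ∀ x : M, a • x ∈ N → x ∈ N := by
  rw [isTorsionFree_iff_smul_eq_zero]
  constructor
  · intro h a ha x hx
    have := h a (Submodule.Quotient.mk x) (by rwa [← Submodule.Quotient.mk_smul,
      Submodule.Quotient.mk_eq_zero])
    simpa [ha, Submodule.Quotient.mk_eq_zero] using this
  · intro h a m hm
    induction m using Submodule.Quotient.induction_on with | _ x => ?_
    rw [← Submodule.Quotient.mk_smul, Submodule.Quotient.mk_eq_zero] at hm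
    by_cases ha : a = 0
    · exact .inl ha
    · exact .inr ((Submodule.Quotient.mk_eq_zero N).2 (h a ha x hm))

theorem isTorsionFree_homologyOf_iff {S C : Type*} [CommRing S] [IsDomain S] [AddCommGroup C]
    [Module S C] [IsTorsionFree S C] {d : C →ₗ[S] C} (hd : d ∘ₗ d = 0) :
    IsTorsionFree S (homologyOf d) ↔ IsTorsionFree S (C ⧸ LinearMap.range d) := by
  refine (Submodule.isTorsionFree_quotient_iff _ :
    IsTorsionFree S (LinearMap.ker d ⧸ _) ↔ _).trans ?_
  rw [Submodule.isTorsionFree_quotient_iff]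
  refine ⟨fun h a ha x hx ↦ ?_, fun h a ha z hz ↦ h a ha z hz⟩
  -- `a • d x = d (a • x) = 0` since `range d ≤ ker d`, so `x` is a cycle.
  have hx' : x ∈ LinearMap.ker d := by
    have := LinearMap.range_le_ker_iff.2 hd hx
    rw [LinearMap.mem_ker, map_smul, smul_eq_zero] at this
    exact this.resolve_left ha
  exact h a ha ⟨x, hx'⟩ hx

theorem finrank_homologyOf_add_two_mul_finrank_range {F V : Type*} [Field F] [AddCommGroup V]
    [Module F V] [FiniteDimensional F V] {e : V →ₗ[F] V} (he : e ∘ₗ e = 0) :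
    finrank F (homologyOf e) + 2 * finrank F (LinearMap.range e) = finrank F V := by
  have hle : LinearMap.range e ≤ LinearMap.ker e := LinearMap.range_le_ker_iff.2 he
  have hH : finrank F (homologyOf e) + finrank F (LinearMap.range e)
      = finrank F (LinearMap.ker e) := by
    rw [← LinearEquiv.finrank_eq (Submodule.comapSubtypeEquivOfLe hle)]
    exact Submodule.finrank_quotient_add_finrank _
  have := LinearMap.finrank_range_add_finrank_ker e
  omega

section BaseChange

variable {S : Type*} [CommRing S] {M N : Type*} [AddCommGroup M] [Module S M] [AddCommGroup N]
  [Module S N]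

theorem LinearMap.range_baseChange_eq_range_baseChange_subtype (f : M →ₗ[S] N) (A : Type*)
    [CommRing A] [Algebra S A] :
    range (f.baseChange A) = range ((range f).subtype.baseChange A) := by
  conv_lhs => rw [← subtype_comp_codRestrict f (range f) (mem_range_self f)]
  rw [baseChange_comp]
  refine range_comp_of_range_eq_top _ (range_eq_top.2 ?_)
  rw [baseChange_eq_ltensor]
  exact lTensor_surjective A (surjective_rangeRestrict f)

variable [Nontrivial S] (F : Type*) [Field F] [Algebra S F]

theorem LinearMap.finrank_range_baseChange_add_finrank_ker (f : M →ₗ[S] N) [Free S (range f)]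
    [Module.Finite S (range f)] :
    finrank F (range (f.baseChange F)) + finrank F (ker ((range f).subtype.baseChange F))
      = finrank S (range f) := by
  rw [range_baseChange_eq_range_baseChange_subtype, finrank_range_add_finrank_ker,
    finrank_baseChange]

theorem finrank_homologyOf_baseChange_add_two_mul_finrank_range [Free S M] [Module.Finite S M]
    {d : M →ₗ[S] M} (hd : d ∘ₗ d = 0) :
    finrank F (homologyOf (d.baseChange F)) + 2 * finrank F (LinearMap.range (d.baseChange F))
      = finrank S M := by
  rw [← finrank_baseChange (R := F) (S := S)]
  refine finrank_homologyOf_add_two_mul_finrank_range ?_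
  rw [← LinearMap.baseChange_comp, hd, LinearMap.baseChange_zero]

end BaseChange

open IsLocalRing in
theorem Submodule.isTorsionFree_quotient_iff_lTensor_residueField_injective {S C : Type*}
    [CommRing S] [IsDomain S] [IsDiscreteValuationRing S] [AddCommGroup C] [Module S C]
    [Free S C] [Module.Finite S C] (B : Submodule S C) :
    IsTorsionFree S (C ⧸ B) ↔ Function.Injective (B.subtype.lTensor (ResidueField S)) := by
  rw [← split_injective_iff_lTensor_residueField_injective]
  have hsplit := (Function.Exact.split_tfae (LinearMap.exact_subtype_mkQ B)
    B.injective_subtype B.mkQ_surjective).out 0 1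
  constructor
  · intro _
    exact hsplit.1 (projective_lifting_property _ LinearMap.id B.mkQ_surjective)
  · intro h
    have : Free S (C ⧸ B) := free_of_lTensor_residueField_injective B.subtype B.mkQ
      B.mkQ_surjective (LinearMap.exact_subtype_mkQ B)
      ((split_injective_iff_lTensor_residueField_injective _).1 h)
    infer_instance

/-- Over a discrete valuation ring `S` with residue field `k`
and fraction field `K`, for a finite free `S`-module `C` and a differential
`∂` with `∂ ∘ ∂ = 0`, the equality `dim_k H(∂_k) = dim_K H(∂_K)` holds if and
only if the homology `H = ker ∂ / range ∂` is torsion free (equivalently, a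
free `S`-module). -/
theorem stmt10 {S : Type*} [CommRing S] [IsDomain S] [IsDiscreteValuationRing S]
    {C : Type*} [AddCommGroup C] [Module S C] [Module.Free S C] [Module.Finite S C]
    (d : C →ₗ[S] C) (hd : d ∘ₗ d = 0) :
    (Module.finrank (IsLocalRing.ResidueField S)
        (homologyOf (LinearMap.baseChange (IsLocalRing.ResidueField S) d)) =
      Module.finrank (FractionRing S)
        (homologyOf (LinearMap.baseChange (FractionRing S) d)) ↔
      Submodule.torsion S (homologyOf d) = ⊥) ∧
    (Submodule.torsion S (homologyOf d) = ⊥ ↔ Module.Free S (homologyOf d)) := by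
  have hk := finrank_homologyOf_baseChange_add_two_mul_finrank_range
    (IsLocalRing.ResidueField S) hd
  have hK := finrank_homologyOf_baseChange_add_two_mul_finrank_range (FractionRing S) hd
  have hBk := d.finrank_range_baseChange_add_finrank_ker (IsLocalRing.ResidueField S)
  have hBK := d.finrank_range_baseChange_add_finrank_ker (FractionRing S)
  have hK0 : finrank (FractionRing S)
      (LinearMap.ker ((LinearMap.range d).subtype.baseChange (FractionRing S))) = 0 := by
    rw [Submodule.finrank_eq_zero, LinearMap.ker_eq_bot, LinearMap.baseChange_eq_ltensor]
    exact Flat.lTensor_preserves_injective_linearMap _ Subtype.val_injective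
  have htors : Submodule.torsion S (homologyOf d) = ⊥ ↔
      finrank (IsLocalRing.ResidueField S) (LinearMap.ker
        ((LinearMap.range d).subtype.baseChange (IsLocalRing.ResidueField S))) = 0 := by
    rw [← Submodule.isTorsionFree_iff_torsion_eq_bot, isTorsionFree_homologyOf_iff hd,
      Submodule.isTorsionFree_quotient_iff_lTensor_residueField_injective,
      Submodule.finrank_eq_zero, LinearMap.ker_eq_bot, LinearMap.baseChange_eq_ltensor]
  refine ⟨by rw [htors]; omega, ?_⟩
  have : Module.Finite S (homologyOf d) := inferInstanceAs (Module.Finite S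
    (LinearMap.ker d ⧸ (LinearMap.range d).comap (LinearMap.ker d).subtype))
  rw [← Submodule.isTorsionFree_iff_torsion_eq_bot, free_iff_isTorsionFree]
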